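/- arXiv:1305.1653 — 3 statements merged into one kernel-verified Lean document; each statement's English description precedes it below -/
import Mathlib

section
/- Let R be a d×d reflection nonsingular M-matrix, x ∈ ℝ_+^d with x_i = 0, and α < 0. Consider the driving function X(t) = x + α e_i t on [0,T], and let J ⊆ {1,…,d} with i ∈ J be the set {j : Z_j(0) = 0} (where Z(0) = x). Then on the interval [0, τ] before any new component hits zero, the functions Z(t) and L(t) given by [Z(t)]_J = 0, [Z(t)]_{J^c} = [x]_{J^c} + |α| [R]_{J^c J} [R]_J^{-1} [e_i]_J t, [L(t)]_{J^c} = 0, [L(t)]_J = |α| [R]_J^{-1} [e_i]_J t, satisfy Z(t) = X(t) + R L(t), Z(t) ∈ ℝ_+^d, L is nondecreasing with L(0) = 0, and L_j increases only when Z_j = 0; hence they solve the Skorohod problem on [0, τ]. Moreover Z is nonincreasing and L is nondecreasing on this interval. -/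
/-!
The substance is the M-matrix fact that a principal submatrix `R_J = 1 - Q_J` maps no vector
with a negative entry into the nonnegative orthant. Otherwise the negative part of that vector,
extended by zero, is a nonzero `w ≥ 0` with `w ≤ Q w`; then `w ≤ Q^k w` gives `‖Q^k‖ ≥ 1` in the
`ℓ^∞` operator norm for every `k`, and Gelfand's formula forces `ρ(Q) ≥ 1`. Applied to `±u` for
`u ∈ ker R_J`, the same fact shows that `R_J` is invertible.

Hence `v = R_J⁻¹ [e_i]_J ≥ 0`. Since the off-diagonal entries of `R` are `≤ 0`, the slope
`|α| [R]_{J^c J} v` of `[Z]_{J^c}` is `≤ 0` and that of `[L]_J` is `≥ 0`; on `J` the equation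
`Z = X + R L` is `R_J v = [e_i]_J`, and `Z(τ) ≥ 0` follows by continuity.
-/

open Set

def IsReflMMatrix {n : Type*} [Fintype n] [DecidableEq n] (R : Matrix n n ℝ) : Prop :=
  ∃ Q : Matrix n n ℝ, (∀ i j, 0 ≤ Q i j) ∧ (∀ i, Q i i = 0) ∧
    spectralRadius ℂ (Q.map (algebraMap ℝ ℂ)) < 1 ∧ R = 1 - Q

open Filter Matrix

variable {n : Type*} [Fintype n]

theorem sum_mul_dite_eq_sum_subtype (p : n → Prop) [DecidablePred p] (a : n → ℝ)
    (u : Subtype p → ℝ) :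
    ∑ j, a j * (if h : p j then u ⟨j, h⟩ else 0) = ∑ k : Subtype p, a k * u k := by
  have hp : ∀ k : Subtype p, a k * (if h : p k then u ⟨k, h⟩ else 0) = a k * u k :=
    fun k => by rw [dif_pos k.2]
  have hnp : ∀ k : {j // ¬p j}, a k * (if h : p k then u ⟨k, h⟩ else 0) = 0 :=
    fun k => by rw [dif_neg k.2, mul_zero]
  rw [← Fintype.sum_subtype_add_sum_subtype p]
  simp only [hp, hnp, Finset.sum_const_zero, add_zero]

theorem Matrix.mulVec_mono_of_nonneg {m : Type*} {A : Matrix m n ℝ} (hA : ∀ i j, 0 ≤ A i j)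
    {u w : n → ℝ} (h : u ≤ w) : A *ᵥ u ≤ A *ᵥ w := fun i =>
  Finset.sum_le_sum fun j _ => mul_le_mul_of_nonneg_left (h j) (hA i j)

theorem pi_norm_le_pi_norm_of_nonneg_of_le {u w : n → ℝ} (hu : 0 ≤ u) (h : u ≤ w) :
    ‖u‖ ≤ ‖w‖ :=
  (pi_norm_le_iff_of_nonneg (norm_nonneg w)).2 fun j => by
    rw [Real.norm_of_nonneg (hu j)]
    exact (h j).trans ((le_abs_self _).trans (norm_le_pi_norm w j))

section LinftyOpNorm

attribute [local instance] Matrix.linftyOpNormedRing Matrix.linftyOpNormedAlgebra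
  Matrix.linftyOpNormedAddCommGroup

theorem Matrix.linfty_opNorm_map_algebraMap [DecidableEq n] (A : Matrix n n ℝ) :
    ‖A.map (algebraMap ℝ ℂ)‖ = ‖A‖ := by
  simp [Matrix.linfty_opNorm_def]

theorem one_le_spectralRadius_of_le_mulVec [DecidableEq n] {Q : Matrix n n ℝ}
    (hQ : ∀ i j, 0 ≤ Q i j) {w : n → ℝ} (hw0 : 0 ≤ w) (hw : w ≠ 0) (hwQ : w ≤ Q *ᵥ w) :
    1 ≤ spectralRadius ℂ (Q.map (algebraMap ℝ ℂ)) := by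
  have hiter : ∀ k : ℕ, w ≤ (Q ^ k) *ᵥ w := by
    intro k
    induction k with
    | zero => simp
    | succ k ih =>
      rw [pow_succ', ← mulVec_mulVec]
      exact hwQ.trans (mulVec_mono_of_nonneg hQ ih)
  have hnorm : ∀ k : ℕ, 1 ≤ ‖(Q.map (algebraMap ℝ ℂ)) ^ k‖ := by
    intro k
    rw [← Matrix.map_pow, linfty_opNorm_map_algebraMap]
    refine le_of_mul_le_mul_right ?_ (norm_pos_iff.2 hw)
    calc 1 * ‖w‖ ≤ ‖(Q ^ k) *ᵥ w‖ := by
          rw [one_mul]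
          exact pi_norm_le_pi_norm_of_nonneg_of_le hw0 (hiter k)
      _ ≤ ‖Q ^ k‖ * ‖w‖ := linfty_opNorm_mulVec _ _
  refine ge_of_tendsto (spectrum.pow_nnnorm_pow_one_div_tendsto_nhds_spectralRadius _) ?_
  filter_upwards [eventually_ge_atTop 1] with k hk
  refine ENNReal.one_le_rpow ?_ (by positivity)
  exact_mod_cast hnorm k

end LinftyOpNorm

theorem eq_zero_of_le_submatrix_mulVec_of_spectralRadius_lt_one [DecidableEq n]
    {Q : Matrix n n ℝ} (hQ : ∀ i j, 0 ≤ Q i j)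
    (hρ : spectralRadius ℂ (Q.map (algebraMap ℝ ℂ)) < 1) (p : n → Prop) [DecidablePred p]
    {u : Subtype p → ℝ} (hu0 : 0 ≤ u) (huQ : u ≤ Q.submatrix Subtype.val Subtype.val *ᵥ u) :
    u = 0 := by
  by_contra hu
  set w : n → ℝ := fun j => if h : p j then u ⟨j, h⟩ else 0 with hw_def
  have hw0 : 0 ≤ w := fun j => by
    by_cases h : p j
    · simpa [hw_def, h] using hu0 _
    · simp [hw_def, h]
  have hw : w ≠ 0 := by
    obtain ⟨k, hk⟩ := Function.ne_iff.1 hu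
    exact Function.ne_iff.2 ⟨k, by simpa [hw_def, k.2] using hk⟩
  have hQw0 : 0 ≤ Q *ᵥ w := by simpa using mulVec_mono_of_nonneg hQ hw0
  have hwQ : w ≤ Q *ᵥ w := fun j => by
    by_cases h : p j
    · calc w j = u ⟨j, h⟩ := dif_pos h
        _ ≤ (Q.submatrix Subtype.val Subtype.val *ᵥ u) ⟨j, h⟩ := huQ _
        _ = (Q *ᵥ w) j := (sum_mul_dite_eq_sum_subtype p (Q j) u).symm
    · simpa [hw_def, h] using hQw0 j
  exact not_lt.2 (one_le_spectralRadius_of_le_mulVec hQ hw0 hw hwQ) hρ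

namespace IsReflMMatrix

variable [DecidableEq n] {R : Matrix n n ℝ}

theorem apply_nonpos (hR : IsReflMMatrix R) {i j : n} (hij : i ≠ j) : R i j ≤ 0 := by
  obtain ⟨Q, hQ, -, -, rfl⟩ := hR
  simpa [one_apply_ne hij] using hQ i j

theorem sum_submatrix_mul_nonpos (hR : IsReflMMatrix R) (p : n → Prop) [DecidablePred p]
    {v : Subtype p → ℝ} (hv : 0 ≤ v) {j : n} (hj : ¬p j) : ∑ k : Subtype p, R j k * v k ≤ 0 :=
  Finset.sum_nonpos fun k _ =>
    mul_nonpos_of_nonpos_of_nonneg (hR.apply_nonpos fun h => hj (h ▸ k.2)) (hv k)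

theorem nonneg_of_submatrix_mulVec_nonneg (hR : IsReflMMatrix R) (p : n → Prop) [DecidablePred p]
    {v : Subtype p → ℝ} (hv : 0 ≤ R.submatrix (Subtype.val : Subtype p → n) Subtype.val *ᵥ v) :
    0 ≤ v := by
  obtain ⟨Q, hQ, -, hρ, rfl⟩ := hR
  set QJ := Q.submatrix (Subtype.val : Subtype p → n) (Subtype.val : Subtype p → n)
  have hRJ : (1 - Q).submatrix (Subtype.val : Subtype p → n) Subtype.val = 1 - QJ := by
    rw [← submatrix_one _ Subtype.val_injective]
    rfl
  have hQv : QJ *ᵥ v ≤ v := by simpa [hRJ, sub_mulVec] using hv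
  have hQ' : ∀ i j, 0 ≤ QJ i j := fun i j => hQ i j
  have hneg : v⁻ ≤ QJ *ᵥ v⁻ := by
    refine sup_le ?_ (by simpa using mulVec_mono_of_nonneg hQ' (negPart_nonneg v))
    calc -v ≤ QJ *ᵥ (-v) := by rw [mulVec_neg]; exact neg_le_neg hQv
      _ ≤ QJ *ᵥ v⁻ := mulVec_mono_of_nonneg hQ' (neg_le_negPart v)
  exact negPart_eq_zero.1
    (eq_zero_of_le_submatrix_mulVec_of_spectralRadius_lt_one hQ hρ p (negPart_nonneg v) hneg)

theorem isUnit_det_submatrix (hR : IsReflMMatrix R) (p : n → Prop) [DecidablePred p] :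
    IsUnit (R.submatrix (Subtype.val : Subtype p → n) Subtype.val).det := by
  refine isUnit_iff_ne_zero.2 fun hdet => ?_
  obtain ⟨u, hu, hRu⟩ := exists_mulVec_eq_zero_iff.2 hdet
  refine hu (le_antisymm ?_ (hR.nonneg_of_submatrix_mulVec_nonneg p hRu.ge))
  exact neg_nonneg.1 (hR.nonneg_of_submatrix_mulVec_nonneg p (by simp [mulVec_neg, hRu]))

theorem submatrix_mulVec_inv_mulVec (hR : IsReflMMatrix R) (p : n → Prop) [DecidablePred p]
    (e : Subtype p → ℝ) :
    R.submatrix (Subtype.val : Subtype p → n) Subtype.val *ᵥ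
      ((R.submatrix (Subtype.val : Subtype p → n) Subtype.val)⁻¹ *ᵥ e) = e := by
  rw [mulVec_mulVec, mul_nonsing_inv _ (hR.isUnit_det_submatrix p), one_mulVec]

theorem inv_submatrix_mulVec_nonneg (hR : IsReflMMatrix R) (p : n → Prop) [DecidablePred p]
    {e : Subtype p → ℝ} (he : 0 ≤ e) :
    0 ≤ (R.submatrix (Subtype.val : Subtype p → n) Subtype.val)⁻¹ *ᵥ e :=
  hR.nonneg_of_submatrix_mulVec_nonneg p ((hR.submatrix_mulVec_inv_mulVec p e).symm ▸ he)

end IsReflMMatrix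

theorem nonneg_on_Icc_of_nonneg_on_Ico {f : ℝ → ℝ} (hf : Continuous f) {a b : ℝ} (ha : 0 ≤ f a)
    (h : ∀ t ∈ Ico a b, 0 ≤ f t) : ∀ t ∈ Icc a b, 0 ≤ f t := by
  rcases eq_or_ne a b with rfl | hab
  · intro t ht
    rw [Icc_self] at ht
    rwa [mem_singleton_iff.1 ht]
  · rw [← closure_Ico hab]
    exact fun t ht => closure_minimal h (isClosed_le continuous_const hf) ht

theorem stmt15_general {d : ℕ} (R : Matrix (Fin d) (Fin d) ℝ) (hR : IsReflMMatrix R)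
    (x : Fin d → ℝ) (hx : ∀ j, 0 ≤ x j) (i : Fin d) (hxi : x i = 0)
    (α : ℝ) (hα : α < 0) (τ : ℝ)
    (v : {j // x j = 0} → ℝ)
    (hv : v = ((R.submatrix (Subtype.val : {j : Fin d // x j = 0} → Fin d)
        (Subtype.val : {j : Fin d // x j = 0} → Fin d))⁻¹).mulVec
      (fun j : {j : Fin d // x j = 0} => if (j : Fin d) = i then (1 : ℝ) else 0))
    (Z L : ℝ → Fin d → ℝ)
    (hZ : Z = fun t j => if h : x j = 0 then 0
      else x j + |α| * (∑ k : {j : Fin d // x j = 0}, R j (k : Fin d) * v k) * t)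
    (hL : L = fun t j => if h : x j = 0 then |α| * v ⟨j, h⟩ * t else 0)
    (hpos : ∀ t ∈ Ico (0 : ℝ) τ, ∀ j, x j ≠ 0 → 0 < Z t j) :
    (∀ t ∈ Icc (0 : ℝ) τ, ∀ j,
      Z t j = (x j + α * t * (if j = i then 1 else 0)) + ∑ k, R j k * L t k) ∧
    (∀ t ∈ Icc (0 : ℝ) τ, ∀ j, 0 ≤ Z t j) ∧
    (∀ j, L 0 j = 0) ∧
    (∀ j, MonotoneOn (fun t => L t j) (Icc 0 τ)) ∧
    (∀ j, ∀ s t : ℝ, 0 ≤ s → s ≤ t → t ≤ τ →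
      (∀ u ∈ Icc s t, Z u j ≠ 0) → L t j = L s j) ∧
    (∀ j, AntitoneOn (fun t => Z t j) (Icc 0 τ)) := by
  have hRv : ∀ j : {j // x j = 0},
      ∑ k : {j // x j = 0}, R j k * v k = if (j : Fin d) = i then 1 else 0 := by
    rw [hv]
    exact congrFun (hR.submatrix_mulVec_inv_mulVec (fun j => x j = 0) _)
  have hv0 : 0 ≤ v := hv ▸ hR.inv_submatrix_mulVec_nonneg _ fun j => by positivity
  have hRL : ∀ t j, ∑ k, R j k * L t k = |α| * (∑ k : {j // x j = 0}, R j k * v k) * t := by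
    intro t j
    rw [hL, sum_mul_dite_eq_sum_subtype _ (R j) fun k => |α| * v k * t, Finset.mul_sum,
      Finset.sum_mul]
    exact Finset.sum_congr rfl fun k _ => by ring
  refine ⟨fun t _ j => ?_, fun t ht j => ?_, fun j => by simp [hL], fun j a _ b _ hab => ?_,
    fun j s t _ hst _ hZne => ?_, fun j a _ b _ hab => ?_⟩ <;> by_cases hj : x j = 0
  · simp only [hRL, hZ, dif_pos hj, hRv ⟨j, hj⟩, hj, abs_of_neg hα]
    split_ifs <;> ring
  · simp only [hRL, hZ, dif_neg hj, if_neg (fun h : j = i => hj (h ▸ hxi))]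
    ring
  · simp [hZ, hj]
  · refine nonneg_on_Icc_of_nonneg_on_Ico (f := fun t => Z t j) ?_ ?_
      (fun s hs => (hpos s hs j hj).le) t ht
    · simp only [hZ, dif_neg hj]; fun_prop
    · simpa [hZ, hj] using hx j
  · simp only [hL, dif_pos hj]
    exact mul_le_mul_of_nonneg_left hab (mul_nonneg (abs_nonneg α) (hv0 _))
  · simp [hL, hj]
  · exact absurd (by simp [hZ, hj]) (hZne s ⟨le_rfl, hst⟩)
  · simp [hL, hj]
  · simp [hZ, hj]
  · simp only [hZ, dif_neg hj]
    have hc := mul_nonpos_of_nonneg_of_nonpos (abs_nonneg α) (hR.sum_submatrix_mul_nonpos _ hv0 hj)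
    exact (add_le_add_iff_left _).2 (mul_le_mul_of_nonpos_left hab hc)

/-- Explicit solution of the Skorohod problem for the linear driving function
`X(t) = x + α e_i t` with `α < 0`, `x ∈ ℝ_+^d`, `x_i = 0`: with `J = {j : x_j = 0}`,
`v = [R]_J⁻¹ [e_i]_J`, the functions `[Z]_J = 0`,
`[Z]_{J^c}(t) = [x]_{J^c} + |α| [R]_{J^c J} v t`, `[L]_J(t) = |α| v t`, `[L]_{J^c} = 0`
solve the Skorohod problem on `[0, τ]` (before any new component hits zero); moreover `Z`
is nonincreasing and `L` is nondecreasing there. -/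
theorem stmt15 {d : ℕ} (R : Matrix (Fin d) (Fin d) ℝ) (hR : IsReflMMatrix R)
    (x : Fin d → ℝ) (hx : ∀ j, 0 ≤ x j) (i : Fin d) (hxi : x i = 0)
    (α : ℝ) (hα : α < 0) (τ : ℝ) (hτ : 0 ≤ τ)
    (v : {j // x j = 0} → ℝ)
    (hv : v = ((R.submatrix (Subtype.val : {j : Fin d // x j = 0} → Fin d)
        (Subtype.val : {j : Fin d // x j = 0} → Fin d))⁻¹).mulVec
      (fun j : {j : Fin d // x j = 0} => if (j : Fin d) = i then (1 : ℝ) else 0))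
    (Z L : ℝ → Fin d → ℝ)
    (hZ : Z = fun t j => if h : x j = 0 then 0
      else x j + |α| * (∑ k : {j : Fin d // x j = 0}, R j (k : Fin d) * v k) * t)
    (hL : L = fun t j => if h : x j = 0 then |α| * v ⟨j, h⟩ * t else 0)
    (hpos : ∀ t ∈ Ico (0 : ℝ) τ, ∀ j, x j ≠ 0 → 0 < Z t j) :
    (∀ t ∈ Icc (0 : ℝ) τ, ∀ j,
      Z t j = (x j + α * t * (if j = i then 1 else 0)) + ∑ k, R j k * L t k) ∧
    (∀ t ∈ Icc (0 : ℝ) τ, ∀ j, 0 ≤ Z t j) ∧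
    (∀ j, L 0 j = 0) ∧
    (∀ j, MonotoneOn (fun t => L t j) (Icc 0 τ)) ∧
    (∀ j, ∀ s t : ℝ, 0 ≤ s → s ≤ t → t ≤ τ →
      (∀ u ∈ Icc s t, Z u j ≠ 0) → L t j = L s j) ∧
    (∀ j, AntitoneOn (fun t => Z t j) (Icc 0 τ)) :=
  stmt15_general R hR x hx i hxi α hα τ v hv Z L hZ hL hpos
end

section
/- Let S = ℝ_+^d, let R ≤ R̄ be two d×d reflection nonsingular M-matrices, and let X, X̄ : ℝ_+ → ℝ^d be continuous with X(0), X̄(0) ∈ S, X(0) ≤ X̄(0), and X(t) − X(s) ≤ X̄(t) − X̄(s) for all 0 ≤ s ≤ t (componentwise). Let Z, Z̄ be the solutions of the Skorohod problems in S with reflection matrices R, R̄ and driving functions X, X̄, with boundary-term vectors L, L̄. Then Z(t) ≤ Z̄(t) for all t ≥ 0 and L(t) − L(s) ≥ L̄(t) − L̄(s) for all 0 ≤ s ≤ t. -/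
open Set

/-- `Z` (with boundary terms `L`) solves the Skorohod problem in the orthant `ℝ_+^d`
with reflection matrix `R` and driving function `X`. -/
def IsSkorohodSolution {d : ℕ} (R : Matrix (Fin d) (Fin d) ℝ)
    (X Z L : ℝ → Fin d → ℝ) : Prop :=
  (∀ i, Continuous fun t => Z t i) ∧
  (∀ i, Continuous fun t => L t i) ∧
  (∀ t, 0 ≤ t → ∀ i, 0 ≤ Z t i) ∧
  (∀ t, 0 ≤ t → ∀ i, Z t i = X t i + ∑ j, R i j * L t j) ∧
  (∀ i, L 0 i = 0) ∧
  (∀ i, MonotoneOn (fun t => L t i) (Ici 0)) ∧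
  (∀ i, ∀ s t : ℝ, 0 ≤ s → s ≤ t → (∀ u ∈ Icc s t, Z u i ≠ 0) → L t i = L s i)

/-!
Write `R = 1 - Q` and `R̄ = 1 - Q̄`, so that `0 ≤ Q̄ ≤ Q`, and compare the boundary terms through
the gaps `D(a, b) = (L̄ b - L̄ a) - (L b - L a)`. Going back from `s` to the last zero `σ` of `Z_i`
gives `Z_i s - Z̄_i s ≤ (Q̄ D(σ, s))_i`. Feeding this into the one-dimensional Skorohod bound for
`Z̄_i` shows that whenever `γ ≥ 0` bounds every gap on `[0, T]`, so does `Q̄ γ`. Starting from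
`γ = L̄ T` and iterating, the gaps are bounded by `Q̄ ^ k (L̄ T) → 0` (Gelfand's formula and
`ρ(Q̄) < 1`), so `D ≤ 0`, which is the second claim and, by the estimate above, gives the first.
-/

open Filter Topology Matrix NNReal

theorem tendsto_pow_atTop_nhds_zero_of_spectralRadius_lt_one {A : Type*} [NormedRing A]
    [NormedAlgebra ℂ A] [CompleteSpace A] (a : A) (h : spectralRadius ℂ a < 1) :
    Tendsto (fun n => a ^ n) atTop (𝓝 0) := by
  obtain ⟨r, hρr, hr1⟩ := exists_between h
  lift r to ℝ≥0 using (hr1.trans_le le_top).ne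
  refine squeeze_zero_norm' ?_
    (tendsto_pow_atTop_nhds_zero_of_lt_one r.coe_nonneg (by exact_mod_cast hr1))
  have hgelfand := spectrum.pow_nnnorm_pow_one_div_tendsto_nhds_spectralRadius a
  filter_upwards [hgelfand.eventually_lt_const hρr, eventually_ge_atTop 1] with n hn hn1
  rw [one_div, ENNReal.rpow_inv_lt_iff (by positivity), ENNReal.rpow_natCast] at hn
  exact_mod_cast hn.le

theorem Matrix.tendsto_pow_of_spectralRadius_lt_one {n : Type*} [Fintype n] [DecidableEq n]
    (Q : Matrix n n ℝ) (h : spectralRadius ℂ (Q.map (algebraMap ℝ ℂ)) < 1) :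
    Tendsto (fun k => Q ^ k) atTop (𝓝 0) := by
  let _ := Matrix.linftyOpNormedRing (n := n) (α := ℂ)
  let _ := Matrix.linftyOpNormedAlgebra (n := n) (R := ℂ) (α := ℂ)
  have hB := tendsto_pow_atTop_nhds_zero_of_spectralRadius_lt_one _ h
  have hre : Continuous fun B : Matrix n n ℂ => B.map Complex.re :=
    continuous_id.matrix_map Complex.continuous_re
  convert (hre.tendsto 0).comp hB using 1
  · ext k : 1
    simp only [Function.comp_apply]
    rw [← Matrix.map_pow, Matrix.map_map]
    exact (Matrix.map_id' _).symm
  · simp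

namespace Matrix

variable {n : Type*} [Fintype n] {A B : Matrix n n ℝ} {v w : n → ℝ}

theorem mulVec_le_mulVec_of_nonneg (hA : ∀ i j, 0 ≤ A i j) (hvw : v ≤ w) :
    A *ᵥ v ≤ A *ᵥ w := fun i =>
  Finset.sum_le_sum fun j _ => mul_le_mul_of_nonneg_left (hvw j) (hA i j)

theorem mulVec_le_mulVec_of_le (hAB : ∀ i j, A i j ≤ B i j) (hv : 0 ≤ v) :
    A *ᵥ v ≤ B *ᵥ v := fun i =>
  Finset.sum_le_sum fun j _ => mul_le_mul_of_nonneg_right (hAB i j) (hv j)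

theorem zero_mem_upperBounds_of_mulVec_mem [DecidableEq n] {S : Set (n → ℝ)}
    (hA : ∀ i j, 0 ≤ A i j) (hpow : Tendsto (fun k => A ^ k) atTop (𝓝 0))
    {γ : n → ℝ} (hγ : γ ∈ upperBounds S) (hγ0 : 0 ≤ γ)
    (hstep : ∀ β ∈ upperBounds S, 0 ≤ β → A *ᵥ β ∈ upperBounds S) :
    (0 : n → ℝ) ∈ upperBounds S := by
  have hiter : ∀ k, (A ^ k) *ᵥ γ ∈ upperBounds S ∧ 0 ≤ (A ^ k) *ᵥ γ := by
    intro k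
    induction k with
    | zero => simpa using ⟨hγ, hγ0⟩
    | succ k ih =>
      rw [pow_succ', ← mulVec_mulVec]
      refine ⟨hstep _ ih.1 ih.2, ?_⟩
      simpa using mulVec_le_mulVec_of_nonneg hA ih.2
  have hlim : Tendsto (fun k => (A ^ k) *ᵥ γ) atTop (𝓝 0) := by
    simpa [Function.comp_def] using
      ((continuous_id.matrix_mulVec continuous_const).tendsto 0).comp hpow
  exact fun v hv => ge_of_tendsto' hlim fun k => (hiter k).1 hv

end Matrix

def IncreasesOnlyAtZeros (W M : ℝ → ℝ) : Prop :=
  ∀ a b : ℝ, 0 ≤ a → a ≤ b → (∀ u ∈ Icc a b, W u ≠ 0) → M b = M a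

namespace IncreasesOnlyAtZeros

variable {W M : ℝ → ℝ} {s t σ c : ℝ}

theorem eq_of_ne_zero_Ioc (h : IncreasesOnlyAtZeros W M) (hM : Continuous M) (hσ : 0 ≤ σ)
    (hσt : σ ≤ t) (hW : ∀ u ∈ Ioc σ t, W u ≠ 0) : M t = M σ := by
  rcases hσt.eq_or_lt with rfl | hσt
  · rfl
  have hconst : ∀ a ∈ Ioc σ t, M a = M t := fun a ha =>
    (h a t (hσ.trans ha.1.le) ha.2 fun u hu => hW u ⟨ha.1.trans_le hu.1, hu.2⟩).symm
  refine tendsto_nhds_unique (tendsto_const_nhds.congr' ?_)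
    (hM.continuousWithinAt (s := Ioi σ) (x := σ))
  filter_upwards [Ioc_mem_nhdsGT hσt] with a ha using (hconst a ha).symm

theorem exists_eq_of_eq_zero (h : IncreasesOnlyAtZeros W M) (hW : Continuous W)
    (hM : Continuous M) (hs : 0 ≤ s) :
    ∃ σ ∈ Icc 0 s, (σ = 0 ∨ W σ = 0) ∧ M s = M σ := by
  -- `σ` is the last zero of `W` in `[0, s]`, or `0` if there is none.
  have hcpt : IsCompact (Icc 0 s ∩ {u | u = 0 ∨ W u = 0}) :=
    isCompact_Icc.inter_right ((isClosed_singleton).union (isClosed_eq hW continuous_const))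
  obtain ⟨σ, ⟨hσs, hσ⟩, hmax⟩ := hcpt.exists_isGreatest ⟨0, ⟨left_mem_Icc.2 hs, Or.inl rfl⟩⟩
  refine ⟨σ, hσs, hσ, h.eq_of_ne_zero_Ioc hM hσs.1 hσs.2 fun u hu hWu => ?_⟩
  exact hu.1.not_ge (hmax ⟨⟨hσs.1.trans hu.1.le, hu.2⟩, Or.inr hWu⟩)

theorem sub_le (h : IncreasesOnlyAtZeros W M) (hM : Continuous M) (hs : 0 ≤ s) (hst : s ≤ t)
    (hc : 0 ≤ c) (hW : ∀ u ∈ Icc s t, M u - M s - c ≤ W u) : M t - M s ≤ c := by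
  -- After the last time `σ` at which the bound holds, `W > 0`, so `M` cannot increase past `σ`.
  have hcpt : IsCompact (Icc s t ∩ {u | M u - M s ≤ c}) :=
    isCompact_Icc.inter_right (isClosed_le (by fun_prop) continuous_const)
  obtain ⟨σ, ⟨hσt, hσ⟩, hmax⟩ :=
    hcpt.exists_isGreatest ⟨s, ⟨left_mem_Icc.2 hst, by simpa using hc⟩⟩
  rw [h.eq_of_ne_zero_Ioc hM (hs.trans hσt.1) hσt.2 fun u hu => ?_]
  · exact hσ
  have hu' : u ∈ Icc s t := ⟨hσt.1.trans hu.1.le, hu.2⟩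
  have hlarge : c < M u - M s := not_le.1 fun hle => hu.1.not_ge (hmax ⟨hu', hle⟩)
  exact (lt_of_lt_of_le (by linarith) (hW u hu')).ne'

end IncreasesOnlyAtZeros

section Skorohod

variable {d : ℕ} {R Q Qb : Matrix (Fin d) (Fin d) ℝ} {X Xbar Z Zbar L Lbar : ℝ → Fin d → ℝ}
  {s t a b : ℝ}

namespace IsSkorohodSolution

theorem eq_add_mulVec (h : IsSkorohodSolution R X Z L) (ht : 0 ≤ t) : Z t = X t + R *ᵥ L t :=
  funext (h.2.2.2.1 t ht)

theorem nonneg (h : IsSkorohodSolution R X Z L) (ht : 0 ≤ t) : 0 ≤ Z t :=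
  h.2.2.1 t ht

theorem boundary_mono (h : IsSkorohodSolution R X Z L) (ha : 0 ≤ a) (hab : a ≤ b) :
    L a ≤ L b := fun i =>
  h.2.2.2.2.2.1 i ha (ha.trans hab) hab

theorem boundary_nonneg (h : IsSkorohodSolution R X Z L) (ht : 0 ≤ t) : 0 ≤ L t := by
  simpa [show L 0 = 0 from funext h.2.2.2.2.1] using h.boundary_mono le_rfl ht

theorem zero_eq (h : IsSkorohodSolution R X Z L) : Z 0 = X 0 := by
  rw [h.eq_add_mulVec le_rfl, show L 0 = 0 from funext h.2.2.2.2.1, mulVec_zero, add_zero]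

theorem increasesOnlyAtZeros (h : IsSkorohodSolution R X Z L) (i : Fin d) :
    IncreasesOnlyAtZeros (fun t => Z t i) (fun t => L t i) :=
  h.2.2.2.2.2.2 i

theorem sub_eq (h : IsSkorohodSolution (1 - Q) X Z L) (hs : 0 ≤ s) (ht : 0 ≤ t) :
    Z t - Z s = (X t - X s) + (L t - L s) - Q *ᵥ (L t - L s) := by
  rw [h.eq_add_mulVec ht, h.eq_add_mulVec hs, sub_mulVec, sub_mulVec, one_mulVec, one_mulVec,
    mulVec_sub]
  abel

end IsSkorohodSolution

def boundaryGaps (L Lbar : ℝ → Fin d → ℝ) (T : ℝ) : Set (Fin d → ℝ) :=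
  {v | ∃ a b, 0 ≤ a ∧ a ≤ b ∧ b ≤ T ∧ (Lbar b - Lbar a) - (L b - L a) = v}

theorem exists_sub_le_mulVec_boundaryGap (hZ : IsSkorohodSolution (1 - Q) X Z L)
    (hZbar : IsSkorohodSolution (1 - Qb) Xbar Zbar Lbar) (hQ : ∀ i j, Qb i j ≤ Q i j)
    (h0 : X 0 ≤ Xbar 0) (hincr : ∀ s t, 0 ≤ s → s ≤ t → X t - X s ≤ Xbar t - Xbar s)
    (hs : 0 ≤ s) (i : Fin d) :
    ∃ σ ∈ Icc 0 s, Z s i - Zbar s i ≤ (Qb *ᵥ ((Lbar s - Lbar σ) - (L s - L σ))) i := by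
  obtain ⟨σ, hσ, hzero, hLσ⟩ :=
    (hZ.increasesOnlyAtZeros i).exists_eq_of_eq_zero (hZ.1 i) (hZ.2.1 i) hs
  have hZσ : Z σ i ≤ Zbar σ i := by
    rcases hzero with rfl | hzero
    · rw [hZ.zero_eq, hZbar.zero_eq]
      exact h0 i
    · exact hzero ▸ hZbar.nonneg hσ.1 i
  have hQL := mulVec_le_mulVec_of_le hQ (sub_nonneg.2 (hZ.boundary_mono hσ.1 hσ.2)) i
  have hZinc := congrFun (hZ.sub_eq hσ.1 hs) i
  have hZbarinc := congrFun (hZbar.sub_eq hσ.1 hs) i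
  have hLbar := hZbar.boundary_mono hσ.1 hσ.2 i
  have hX := hincr σ s hσ.1 hσ.2 i
  refine ⟨σ, hσ, ?_⟩
  simp only [mulVec_sub, Pi.sub_apply, Pi.add_apply] at *
  linarith

theorem mulVec_mem_upperBounds_boundaryGaps (hZ : IsSkorohodSolution (1 - Q) X Z L)
    (hZbar : IsSkorohodSolution (1 - Qb) Xbar Zbar Lbar) (hQ : ∀ i j, Qb i j ≤ Q i j)
    (hQb : ∀ i j, 0 ≤ Qb i j) (h0 : X 0 ≤ Xbar 0)
    (hincr : ∀ s t, 0 ≤ s → s ≤ t → X t - X s ≤ Xbar t - Xbar s) {T : ℝ} {γ : Fin d → ℝ}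
    (hγ : γ ∈ upperBounds (boundaryGaps L Lbar T)) (hγ0 : 0 ≤ γ) :
    Qb *ᵥ γ ∈ upperBounds (boundaryGaps L Lbar T) := by
  rintro _ ⟨s, t, hs, hst, htT, rfl⟩ i
  obtain ⟨σ, hσ, hZs⟩ := exists_sub_le_mulVec_boundaryGap hZ hZbar hQ h0 hincr hs i
  have hQbγ : 0 ≤ (Qb *ᵥ γ) i := by simpa using mulVec_le_mulVec_of_nonneg hQb hγ0 i
  have hc : 0 ≤ (L t i - L s i) + (Qb *ᵥ γ) i :=
    add_nonneg (sub_nonneg.2 (hZ.boundary_mono hs hst i)) hQbγ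
  suffices Lbar t i - Lbar s i ≤ (L t i - L s i) + (Qb *ᵥ γ) i by
    simp only [Pi.sub_apply]; linarith
  refine (hZbar.increasesOnlyAtZeros i).sub_le (hZbar.2.1 i) hs hst hc fun u hu => ?_
  have hu0 : 0 ≤ u := hs.trans hu.1
  have hσu : (Lbar u - Lbar σ) - (L u - L σ) ≤ γ :=
    hγ ⟨σ, u, hσ.1, hσ.2.trans hu.1, hu.2.trans htT, rfl⟩
  have hgap := mulVec_le_mulVec_of_nonneg hQb hσu i
  rw [show (Lbar u - Lbar σ) - (L u - L σ) =
      ((Lbar u - Lbar s) - (L u - L s)) + ((Lbar s - Lbar σ) - (L s - L σ)) by abel,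
    mulVec_add] at hgap
  have hQL := mulVec_le_mulVec_of_le hQ (sub_nonneg.2 (hZ.boundary_mono hs hu.1)) i
  have hZinc := congrFun (hZ.sub_eq hs hu0) i
  have hZbarinc := congrFun (hZbar.sub_eq hs hu0) i
  have hZu := hZ.nonneg hu0 i
  have hLu := hZ.boundary_mono hu0 hu.2 i
  have hX := hincr s u hs hu.1 i
  simp only [mulVec_sub, Pi.sub_apply, Pi.add_apply, Pi.zero_apply] at *
  linarith

theorem boundaryGap_nonpos (hZ : IsSkorohodSolution (1 - Q) X Z L)
    (hZbar : IsSkorohodSolution (1 - Qb) Xbar Zbar Lbar) (hQ : ∀ i j, Qb i j ≤ Q i j)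
    (hQb : ∀ i j, 0 ≤ Qb i j) (hQbpow : Tendsto (fun k => Qb ^ k) atTop (𝓝 0))
    (h0 : X 0 ≤ Xbar 0) (hincr : ∀ s t, 0 ≤ s → s ≤ t → X t - X s ≤ Xbar t - Xbar s)
    (ha : 0 ≤ a) (hab : a ≤ b) : (Lbar b - Lbar a) - (L b - L a) ≤ 0 := by
  have hLbar : Lbar b ∈ upperBounds (boundaryGaps L Lbar b) := by
    rintro _ ⟨s, t, hs, hst, htb, rfl⟩ i
    have := hZ.boundary_mono hs hst i
    have := hZbar.boundary_mono (hs.trans hst) htb i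
    have := hZbar.boundary_nonneg hs i
    simp only [Pi.sub_apply, Pi.zero_apply] at *
    linarith
  exact zero_mem_upperBounds_of_mulVec_mem hQb hQbpow hLbar (hZbar.boundary_nonneg (ha.trans hab))
    (fun γ hγ hγ0 => mulVec_mem_upperBounds_boundaryGaps hZ hZbar hQ hQb h0 hincr hγ hγ0)
    ⟨a, b, ha, hab, le_rfl, rfl⟩

end Skorohod

theorem stmt17_general {d : ℕ} (R Rbar : Matrix (Fin d) (Fin d) ℝ)
    (hR : IsReflMMatrix R) (hRbar : IsReflMMatrix Rbar)
    (hRle : ∀ i j, R i j ≤ Rbar i j)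
    (X Xbar Z Zbar L Lbar : ℝ → Fin d → ℝ)
    (h0 : ∀ i, X 0 i ≤ Xbar 0 i)
    (hincr : ∀ s t : ℝ, 0 ≤ s → s ≤ t → ∀ i, X t i - X s i ≤ Xbar t i - Xbar s i)
    (hZ : IsSkorohodSolution R X Z L) (hZbar : IsSkorohodSolution Rbar Xbar Zbar Lbar) :
    (∀ t : ℝ, 0 ≤ t → ∀ i, Z t i ≤ Zbar t i) ∧
    (∀ s t : ℝ, 0 ≤ s → s ≤ t → ∀ i, Lbar t i - Lbar s i ≤ L t i - L s i) := by
  obtain ⟨Q, -, -, -, rfl⟩ := hR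
  obtain ⟨Qb, hQb, -, hQbρ, rfl⟩ := hRbar
  have hQ : ∀ i j, Qb i j ≤ Q i j := fun i j => (sub_le_sub_iff_left _).1 (hRle i j)
  have hgap {a b : ℝ} (ha : 0 ≤ a) (hab : a ≤ b) : (Lbar b - Lbar a) - (L b - L a) ≤ 0 :=
    boundaryGap_nonpos hZ hZbar hQ hQb (Qb.tendsto_pow_of_spectralRadius_lt_one hQbρ) h0 hincr
      ha hab
  refine ⟨fun t ht i => ?_, fun s t hs hst i => by simpa using hgap hs hst i⟩
  obtain ⟨σ, hσ, hZt⟩ := exists_sub_le_mulVec_boundaryGap hZ hZbar hQ h0 hincr ht i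
  have := mulVec_le_mulVec_of_nonneg hQb (hgap hσ.1 hσ.2) i
  simp only [mulVec_zero, Pi.zero_apply] at this
  linarith

/-- Comparison theorem for the Skorohod problem in the orthant: if `R ≤ R̄` are reflection
nonsingular M-matrices and the driving functions satisfy `X(0) ≤ X̄(0)` and
`X(t) − X(s) ≤ X̄(t) − X̄(s)` for `0 ≤ s ≤ t`, then the solutions satisfy `Z(t) ≤ Z̄(t)`
and the boundary terms satisfy `L(t) − L(s) ≥ L̄(t) − L̄(s)`. -/
theorem stmt17 {d : ℕ} (R Rbar : Matrix (Fin d) (Fin d) ℝ)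
    (hR : IsReflMMatrix R) (hRbar : IsReflMMatrix Rbar)
    (hRle : ∀ i j, R i j ≤ Rbar i j)
    (X Xbar Z Zbar L Lbar : ℝ → Fin d → ℝ)
    (hXcont : ∀ i, Continuous fun t => X t i)
    (hXbarcont : ∀ i, Continuous fun t => Xbar t i)
    (hX0 : ∀ i, 0 ≤ X 0 i) (hXbar0 : ∀ i, 0 ≤ Xbar 0 i)
    (h0 : ∀ i, X 0 i ≤ Xbar 0 i)
    (hincr : ∀ s t : ℝ, 0 ≤ s → s ≤ t → ∀ i, X t i - X s i ≤ Xbar t i - Xbar s i)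
    (hZ : IsSkorohodSolution R X Z L) (hZbar : IsSkorohodSolution Rbar Xbar Zbar Lbar) :
    (∀ t : ℝ, 0 ≤ t → ∀ i, Z t i ≤ Zbar t i) ∧
    (∀ s t : ℝ, 0 ≤ s → s ≤ t → ∀ i, Lbar t i - Lbar s i ≤ L t i - L s i) :=
  stmt17_general R Rbar hR hRbar hRle X Xbar Z Zbar L Lbar h0 hincr hZ hZbar
end

section
/- Let X, X̄ : ℝ_+ → ℝ^N be continuous with X(0), X̄(0) ∈ W_N, X(0) ≤ X̄(0), and X(t) − X(s) ≤ X̄(t) − X̄(s) for 0 ≤ s ≤ t. Let (q_n^±) and (q̄_n^±) be collision parameters with q_n^+ ≤ q̄_n^+ for n = 2,…,N. If Y and Ȳ are the systems of N competing particles with driving functions X, X̄ and parameters (q_n^±), (q̄_n^±) respectively, then Y(t) ≤ Ȳ(t) for all t ≥ 0. -/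
/-! Let `g(t) = max_k (Y_k(t) - Ȳ_k(t))`. Given `t > 0`, take a maximizing particle `k` and enlarge
it to the block `[i, j]` of particles with `Y_i(t) = Y_k(t)` and `Ȳ_j(t) = Ȳ_k(t)`; on this block
the gap `Y - Ȳ` equals `g(t)`. Just before `t`, particle `i` of `Y` is separated from its left
neighbour and particle `j` of `Ȳ` from its right neighbour, so the collision terms at the outer
ends of the block do not move. A positively weighted sum of the increments of `Y - Ȳ` over the
block then telescopes to something nonpositive, so some gap in the block was already at least
`g(t)` slightly earlier. By continuity `g(t) ≤ g(0) ≤ 0`. -/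

open Set

/-- `Y` (with extended vector of collision terms `L`, where component `m : Fin (N+1)`
is the collision term `L_{(m-1,m)}` between particles `m-1` and `m` in `0`-indexed
notation, and the boundary components `0` and `N` vanish identically) is a system of `N`
competing particles with driving function `X` and parameters of collision `qp, qm`. -/
def IsCompetingParticleSystem (N : ℕ) (qp qm : Fin N → ℝ)
    (X Y : ℝ → Fin N → ℝ) (L : ℝ → Fin (N + 1) → ℝ) : Prop :=
  (∀ k, Continuous fun t => Y t k) ∧
  (∀ m, Continuous fun t => L t m) ∧
  (∀ t : ℝ, 0 ≤ t → Monotone (Y t)) ∧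
  (∀ t : ℝ, L t 0 = 0 ∧ L t (Fin.last N) = 0) ∧
  (∀ t : ℝ, 0 ≤ t → ∀ k : Fin N,
    Y t k = X t k + qp k * L t k.castSucc - qm k * L t k.succ) ∧
  (∀ m, L 0 m = 0) ∧
  (∀ m, MonotoneOn (fun t => L t m) (Ici 0)) ∧
  (∀ (k : Fin N) (hk : (k : ℕ) + 1 < N), ∀ s t : ℝ, 0 ≤ s → s ≤ t →
    (∀ u ∈ Icc s t, Y u k ≠ Y u ⟨(k : ℕ) + 1, hk⟩) → L t k.succ = L s k.succ)

open Filter Topology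

theorem Monotone.exists_le_eq_and_forall_lt_lt {α β : Type*} [LinearOrder α] [WellFoundedLT α]
    [PartialOrder β] {a : α → β} (ha : Monotone a) (k : α) :
    ∃ i ≤ k, a i = a k ∧ ∀ m < i, a m < a i := by
  obtain ⟨i, hi, hmin⟩ := wellFounded_lt.has_min {m | a m = a k} ⟨k, rfl⟩
  exact ⟨i, not_lt.1 (hmin k rfl), hi,
    fun m hm => (ha hm.le).lt_of_ne fun h => hmin m (h.trans hi) hm⟩

theorem Monotone.exists_ge_eq_and_forall_gt_gt {α β : Type*} [LinearOrder α] [WellFoundedGT α]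
    [PartialOrder β] {a : α → β} (ha : Monotone a) (k : α) :
    ∃ j ≥ k, a j = a k ∧ ∀ m > j, a j < a m :=
  ha.dual.exists_le_eq_and_forall_lt_lt (α := αᵒᵈ) k

theorem Monotone.sub_eq_of_mem_Icc {ι β : Type*} [LinearOrder ι] [AddCommGroup β] [PartialOrder β]
    [IsOrderedAddMonoid β] {y z : ι → β} (hy : Monotone y) (hz : Monotone z) {i j k m : ι}
    (hmax : ∀ n, y n - z n ≤ y k - z k) (hyi : y i = y k) (hzj : z j = z k)
    (hm : m ∈ Icc i j) : y m - z m = y k - z k := by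
  refine le_antisymm (hmax m) ?_
  rcases le_total m k with h | h
  · exact sub_le_sub (hyi ▸ hy hm.1) (hz h)
  · exact sub_le_sub (hy h) (hzj ▸ hz hm.2)

theorem eventually_nhdsLT_forall_Icc {α : Type*} [LinearOrder α] [TopologicalSpace α]
    [OrderTopology α] [NoMinOrder α] {t : α} {P : α → Prop} (h : ∀ᶠ v in 𝓝[≤] t, P v) :
    ∀ᶠ u in 𝓝[<] t, ∀ v ∈ Icc u t, P v := by
  obtain ⟨l, hl, hsub⟩ := mem_nhdsLE_iff_exists_Ioc_subset.1 h
  filter_upwards [Ioo_mem_nhdsLT hl] with u hu v hv using hsub ⟨hu.1.trans_le hv.1, hv.2⟩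

theorem Continuous.apply_le_of_forall_exists_Ico_le {g : ℝ → ℝ} (hg : Continuous g) {a : ℝ}
    (h : ∀ t > a, ∃ u ∈ Ico a t, g t ≤ g u) {T : ℝ} (hT : a ≤ T) : g T ≤ g a := by
  set C := Icc a T ∩ {s | g T ≤ g s}
  have hC : IsClosed C := isClosed_Icc.inter (isClosed_le continuous_const hg)
  have hCbdd : BddBelow C := ⟨a, fun s hs => hs.1.1⟩
  have hmem : sInf C ∈ C := hC.csInf_mem ⟨T, ⟨hT, le_rfl⟩, le_refl (g T)⟩ hCbdd
  rcases hmem.1.1.eq_or_lt with hinf | hinf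
  · exact hinf ▸ hmem.2
  · obtain ⟨u, hu, hle⟩ := h _ hinf
    have huC : u ∈ C := ⟨⟨hu.1, hu.2.le.trans hmem.1.2⟩, hmem.2.trans hle⟩
    exact absurd (csInf_le hCbdd huC) hu.2.not_ge

theorem sum_Icc_mul_sub_mul_succ_le {c d F : ℕ → ℝ} (hF : ∀ n, 0 ≤ F n) {i j : ℕ} (hij : i ≤ j)
    (hcd : ∀ n, i ≤ n → n < j → c (n + 1) ≤ d n) :
    ∑ n ∈ Finset.Icc i j, (c n * F n - d n * F (n + 1)) ≤ c i * F i - d j * F (j + 1) := by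
  induction j, hij using Nat.le_induction with
  | base => simp
  | succ j hij ih =>
    rw [Finset.sum_Icc_succ_top (by omega)]
    have := ih fun n h1 h2 => hcd n h1 (by omega)
    have := mul_le_mul_of_nonneg_right (hcd j hij (by omega)) (hF (j + 1))
    linarith

theorem le_sum_Icc_mul_sub_mul_succ {c d F : ℕ → ℝ} (hF : ∀ n, 0 ≤ F n) {i j : ℕ} (hij : i ≤ j)
    (hcd : ∀ n, i ≤ n → n < j → d n ≤ c (n + 1)) :
    c i * F i - d j * F (j + 1) ≤ ∑ n ∈ Finset.Icc i j, (c n * F n - d n * F (n + 1)) := by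
  have h := sum_Icc_mul_sub_mul_succ_le (c := -c) (d := -d) hF hij
    fun n h1 h2 => neg_le_neg (hcd n h1 h2)
  simp only [Pi.neg_apply, neg_mul, sub_neg_eq_add, neg_add_eq_sub] at h
  rw [← neg_le_neg_iff, ← Finset.sum_neg_distrib]
  convert h using 2 <;> ring

/-- With these weights, `w (n + 1) * p (n + 1) = w n * q n`: the collision terms inside a block
cancel in the weighted sum of the equations of motion. -/
noncomputable def collisionWeight (p q : ℕ → ℝ) (n : ℕ) : ℝ := ∏ l ∈ Finset.range n, q l / p (l + 1)

theorem collisionWeight_pos {p q : ℕ → ℝ} (hp : ∀ n, 0 < p n) (hq : ∀ n, 0 < q n) (n : ℕ) :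
    0 < collisionWeight p q n :=
  Finset.prod_pos fun l _ => div_pos (hq l) (hp (l + 1))

theorem collisionWeight_succ_mul {p q : ℕ → ℝ} {n : ℕ} (hp : p (n + 1) ≠ 0) :
    collisionWeight p q (n + 1) * p (n + 1) = collisionWeight p q n * q n := by
  rw [collisionWeight, Finset.prod_range_succ, mul_assoc, div_mul_cancel₀ _ hp, collisionWeight]

/-- The abstract form of one step on a block `[i, j]`: `D n` is the increment of the gap
`Y_n - Ȳ_n`, `x n` that of the driving functions, and `ℓ`, `ℓ'` are the increments of the
collision terms of the two systems, frozen at the outer ends of the block. -/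
theorem exists_mem_Icc_increment_nonpos {p q p' q' x ℓ ℓ' D : ℕ → ℝ} {i j : ℕ} (hij : i ≤ j)
    (hp : ∀ n, 0 < p n) (hq : ∀ n, 0 < q n) (hp' : ∀ n, 0 ≤ p' n)
    (hpp' : ∀ n, i ≤ n → n < j → p (n + 1) ≤ p' (n + 1))
    (hq'q : ∀ n, i ≤ n → n < j → q' n ≤ q n)
    (hℓ : ∀ n, 0 ≤ ℓ n) (hℓ' : ∀ n, 0 ≤ ℓ' n) (hℓi : ℓ i = 0) (hℓ'j : ℓ' (j + 1) = 0)
    (hx : ∀ n ∈ Finset.Icc i j, x n ≤ 0)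
    (hD : ∀ n ∈ Finset.Icc i j,
      D n = x n + (p n * ℓ n - q n * ℓ (n + 1)) - (p' n * ℓ' n - q' n * ℓ' (n + 1))) :
    ∃ n ∈ Finset.Icc i j, D n ≤ 0 := by
  set w := collisionWeight p q
  have hw : ∀ n, 0 < w n := collisionWeight_pos hp hq
  have hwstep : ∀ n, w (n + 1) * p (n + 1) = w n * q n :=
    fun n => collisionWeight_succ_mul (hp (n + 1)).ne'
  have hdrift : ∑ n ∈ Finset.Icc i j, w n * x n ≤ 0 :=
    Finset.sum_nonpos fun n hn => mul_nonpos_of_nonneg_of_nonpos (hw n).le (hx n hn)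
  have hcoll : ∑ n ∈ Finset.Icc i j, (w n * p n * ℓ n - w n * q n * ℓ (n + 1)) ≤ 0 := by
    have h := sum_Icc_mul_sub_mul_succ_le (c := fun n => w n * p n) (d := fun n => w n * q n)
      hℓ hij fun n _ _ => (hwstep n).le
    have := mul_nonneg (mul_nonneg (hw j).le (hq j).le) (hℓ (j + 1))
    rw [hℓi] at h
    linarith
  have hcoll' : 0 ≤ ∑ n ∈ Finset.Icc i j, (w n * p' n * ℓ' n - w n * q' n * ℓ' (n + 1)) := by
    have h := le_sum_Icc_mul_sub_mul_succ (c := fun n => w n * p' n) (d := fun n => w n * q' n)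
      hℓ' hij fun n h1 h2 => calc
        w n * q' n ≤ w n * q n := mul_le_mul_of_nonneg_left (hq'q n h1 h2) (hw n).le
        _ = w (n + 1) * p (n + 1) := (hwstep n).symm
        _ ≤ w (n + 1) * p' (n + 1) := mul_le_mul_of_nonneg_left (hpp' n h1 h2) (hw _).le
    have := mul_nonneg (mul_nonneg (hw i).le (hp' i)) (hℓ' i)
    rw [hℓ'j] at h
    linarith
  have hsum : ∑ n ∈ Finset.Icc i j, w n * D n ≤ ∑ n ∈ Finset.Icc i j, 0 := by
    rw [Finset.sum_congr rfl fun n hn => show w n * D n = w n * x n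
        + (w n * p n * ℓ n - w n * q n * ℓ (n + 1))
        - (w n * p' n * ℓ' n - w n * q' n * ℓ' (n + 1)) by rw [hD n hn]; ring,
      Finset.sum_sub_distrib, Finset.sum_add_distrib, Finset.sum_const_zero]
    linarith
  obtain ⟨n, hn, hwD⟩ := Finset.exists_le_of_sum_le (Finset.nonempty_Icc.2 hij) hsum
  exact ⟨n, hn, nonpos_of_mul_nonpos_right hwD (hw n)⟩

/-- Extension of a finite sequence to `ℕ`; the value `1` outside the range keeps extended
collision parameters positive. -/
noncomputable def natExtend {N : ℕ} (f : Fin N → ℝ) (n : ℕ) : ℝ := if h : n < N then f ⟨n, h⟩ else 1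

theorem natExtend_of_lt {N n : ℕ} (f : Fin N → ℝ) (h : n < N) : natExtend f n = f ⟨n, h⟩ :=
  dif_pos h

theorem natExtend_pos {N : ℕ} {f : Fin N → ℝ} (hf : ∀ k, 0 < f k) (n : ℕ) : 0 < natExtend f n := by
  unfold natExtend
  split_ifs
  exacts [hf _, one_pos]

theorem natExtend_nonneg {N : ℕ} {f : Fin N → ℝ} (hf : ∀ k, 0 ≤ f k) (n : ℕ) :
    0 ≤ natExtend f n := by
  unfold natExtend
  split_ifs
  exacts [hf _, zero_le_one]

namespace IsCompetingParticleSystem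

variable {N : ℕ} {qp qm qpbar qmbar : Fin N → ℝ} {X Xbar Y Ybar : ℝ → Fin N → ℝ}
  {L Lbar : ℝ → Fin (N + 1) → ℝ}

theorem continuous_apply (hY : IsCompetingParticleSystem N qp qm X Y L) (k : Fin N) :
    Continuous fun t => Y t k :=
  hY.1 k

theorem monotone_apply (hY : IsCompetingParticleSystem N qp qm X Y L) {t : ℝ} (ht : 0 ≤ t) :
    Monotone (Y t) :=
  hY.2.2.1 t ht

theorem apply_zero (hY : IsCompetingParticleSystem N qp qm X Y L) : Y 0 = X 0 := by
  obtain ⟨-, -, -, -, hYeq, hL0, -⟩ := hY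
  ext k
  simp [hYeq 0 le_rfl k, hL0]

theorem collision_mono (hY : IsCompetingParticleSystem N qp qm X Y L) {u t : ℝ} (hu : 0 ≤ u)
    (hut : u ≤ t) (m : Fin (N + 1)) : L u m ≤ L t m :=
  hY.2.2.2.2.2.2.1 m hu (hu.trans hut) hut

theorem sub_apply_eq (hY : IsCompetingParticleSystem N qp qm X Y L) {u t : ℝ} (hu : 0 ≤ u)
    (hut : u ≤ t) (k : Fin N) :
    Y t k - Y u k = (X t k - X u k) + qp k * (L t k.castSucc - L u k.castSucc)
      - qm k * (L t k.succ - L u k.succ) := by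
  obtain ⟨-, -, -, -, hYeq, -⟩ := hY
  rw [hYeq t (hu.trans hut), hYeq u hu]
  ring

theorem collision_castSucc_eq (hY : IsCompetingParticleSystem N qp qm X Y L) {u t : ℝ}
    (hu : 0 ≤ u) (hut : u ≤ t) {i : Fin N} (hsep : ∀ v ∈ Icc u t, ∀ m < i, Y v m < Y v i) :
    L t i.castSucc = L u i.castSucc := by
  obtain ⟨-, -, -, hbd, -, -, -, hflat⟩ := hY
  rcases i with ⟨_ | i, hi⟩
  · have h0 : (⟨0, hi⟩ : Fin N).castSucc = 0 := rfl
    rw [h0, (hbd t).1, (hbd u).1]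
  · exact hflat ⟨i, by omega⟩ hi u t hu hut
      fun v hv => (hsep v hv ⟨i, by omega⟩ (Fin.mk_lt_mk.2 (by omega))).ne

theorem collision_succ_eq (hY : IsCompetingParticleSystem N qp qm X Y L) {u t : ℝ}
    (hu : 0 ≤ u) (hut : u ≤ t) {j : Fin N} (hsep : ∀ v ∈ Icc u t, ∀ m > j, Y v j < Y v m) :
    L t j.succ = L u j.succ := by
  obtain ⟨-, -, -, hbd, -, -, -, hflat⟩ := hY
  by_cases hj : (j : ℕ) + 1 < N
  · exact hflat j hj u t hu hut fun v hv => (hsep v hv ⟨j + 1, hj⟩ (Fin.lt_def.2 (by simp))).ne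
  · have hlast : j.succ = Fin.last N := Fin.ext (by simp; omega)
    rw [hlast, (hbd t).2, (hbd u).2]

theorem exists_gap_le_of_collision_eq (hY : IsCompetingParticleSystem N qp qm X Y L)
    (hYbar : IsCompetingParticleSystem N qpbar qmbar Xbar Ybar Lbar)
    (hqp : ∀ k, 0 < qp k) (hqm : ∀ k, 0 < qm k) (hqpbar : ∀ k, 0 ≤ qpbar k)
    (hqp_le : ∀ (k : Fin N) (hk : (k : ℕ) + 1 < N), qp ⟨k + 1, hk⟩ ≤ qpbar ⟨k + 1, hk⟩)
    (hqm_le : ∀ k : Fin N, (k : ℕ) + 1 < N → qmbar k ≤ qm k)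
    {u t : ℝ} (hu : 0 ≤ u) (hut : u ≤ t) (hX : ∀ k, X t k - X u k ≤ Xbar t k - Xbar u k)
    {i j : Fin N} (hij : i ≤ j) (hLi : L t i.castSucc = L u i.castSucc)
    (hLj : Lbar t j.succ = Lbar u j.succ) :
    ∃ k, i ≤ k ∧ k ≤ j ∧ Y t k - Ybar t k ≤ Y u k - Ybar u k := by
  have hiN : (i : ℕ) < N + 1 := by omega
  have hjN : (j : ℕ) + 1 < N + 1 := by omega
  obtain ⟨n, hn, hDn⟩ := exists_mem_Icc_increment_nonpos (i := i) (j := j)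
    (p := natExtend qp) (q := natExtend qm) (p' := natExtend qpbar) (q' := natExtend qmbar)
    (x := natExtend fun k => (X t k - X u k) - (Xbar t k - Xbar u k))
    (ℓ := natExtend fun m => L t m - L u m) (ℓ' := natExtend fun m => Lbar t m - Lbar u m)
    (D := natExtend fun k => (Y t k - Ybar t k) - (Y u k - Ybar u k)) hij
    (natExtend_pos hqp) (natExtend_pos hqm) (natExtend_nonneg hqpbar)
    (fun n _ hn => by
      simp only [natExtend_of_lt _ (show n + 1 < N by omega)]
      exact hqp_le ⟨n, by omega⟩ (by simp; omega))
    (fun n _ hn => by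
      simp only [natExtend_of_lt _ (show n < N by omega)]
      exact hqm_le ⟨n, by omega⟩ (by simp; omega))
    (natExtend_nonneg fun m => sub_nonneg.2 (hY.collision_mono hu hut m))
    (natExtend_nonneg fun m => sub_nonneg.2 (hYbar.collision_mono hu hut m))
    (by rw [natExtend_of_lt _ hiN, sub_eq_zero]; exact hLi)
    (by rw [natExtend_of_lt _ hjN, sub_eq_zero]; exact hLj)
    (fun n hn => by
      have hnN : n < N := (Finset.mem_Icc.1 hn).2.trans_lt j.isLt
      rw [natExtend_of_lt _ hnN]
      linarith [hX ⟨n, hnN⟩])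
    (fun n hn => by
      have hnN : n < N := (Finset.mem_Icc.1 hn).2.trans_lt j.isLt
      simp only [natExtend_of_lt _ hnN, natExtend_of_lt _ (show n < N + 1 by omega),
        natExtend_of_lt _ (show n + 1 < N + 1 by omega)]
      have e := hY.sub_apply_eq hu hut ⟨n, hnN⟩
      have f := hYbar.sub_apply_eq hu hut ⟨n, hnN⟩
      simp only [Fin.castSucc_mk, Fin.succ_mk] at e f
      linear_combination e - f)
  obtain ⟨hin, hnj⟩ := Finset.mem_Icc.1 hn
  have hnN : n < N := hnj.trans_lt j.isLt
  rw [natExtend_of_lt _ hnN] at hDn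
  exact ⟨⟨n, hnN⟩, Fin.le_def.2 hin, Fin.le_def.2 hnj, by linarith⟩

theorem exists_Ico_gap_le (hY : IsCompetingParticleSystem N qp qm X Y L)
    (hYbar : IsCompetingParticleSystem N qpbar qmbar Xbar Ybar Lbar)
    (hqp : ∀ k, 0 < qp k) (hqm : ∀ k, 0 < qm k) (hqpbar : ∀ k, 0 ≤ qpbar k)
    (hqp_le : ∀ (k : Fin N) (hk : (k : ℕ) + 1 < N), qp ⟨k + 1, hk⟩ ≤ qpbar ⟨k + 1, hk⟩)
    (hqm_le : ∀ k : Fin N, (k : ℕ) + 1 < N → qmbar k ≤ qm k)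
    (hX : ∀ s t : ℝ, 0 ≤ s → s ≤ t → ∀ k, X t k - X s k ≤ Xbar t k - Xbar s k)
    {t : ℝ} (ht : 0 < t) {k₀ : Fin N} (hk₀ : ∀ k, Y t k - Ybar t k ≤ Y t k₀ - Ybar t k₀) :
    ∃ u ∈ Ico 0 t, ∃ k, Y t k₀ - Ybar t k₀ ≤ Y u k - Ybar u k := by
  obtain ⟨i, hik₀, hYi, hsepY⟩ := (hY.monotone_apply ht.le).exists_le_eq_and_forall_lt_lt k₀
  obtain ⟨j, hk₀j, hYbarj, hsepYbar⟩ :=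
    (hYbar.monotone_apply ht.le).exists_ge_eq_and_forall_gt_gt k₀
  have hsep : ∀ᶠ v in 𝓝 t, (∀ m < i, Y v m < Y v i) ∧ ∀ m > j, Ybar v j < Ybar v m :=
    (eventually_all.2 fun m => eventually_imp_distrib_left.2 fun hm =>
      (hY.continuous_apply m).continuousAt.eventually_lt (hY.continuous_apply i).continuousAt
        (hsepY m hm)).and
    (eventually_all.2 fun m => eventually_imp_distrib_left.2 fun hm =>
      (hYbar.continuous_apply j).continuousAt.eventually_lt
        (hYbar.continuous_apply m).continuousAt (hsepYbar m hm))
  obtain ⟨u, hsepu, hu0, hut⟩ := ((eventually_nhdsLT_forall_Icc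
    (eventually_nhdsWithin_of_eventually_nhds hsep)).and (Ioo_mem_nhdsLT ht)).exists
  obtain ⟨k, hik, hkj, hk⟩ := exists_gap_le_of_collision_eq hY hYbar hqp hqm hqpbar hqp_le hqm_le
    hu0.le hut.le (hX u t hu0.le hut.le) (hik₀.trans hk₀j)
    (hY.collision_castSucc_eq hu0.le hut.le fun v hv => (hsepu v hv).1)
    (hYbar.collision_succ_eq hu0.le hut.le fun v hv => (hsepu v hv).2)
  have hblock := (hY.monotone_apply ht.le).sub_eq_of_mem_Icc (hYbar.monotone_apply ht.le) hk₀
    hYi hYbarj ⟨hik, hkj⟩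
  exact ⟨u, ⟨hu0.le, hut⟩, k, hblock ▸ hk⟩

end IsCompetingParticleSystem

theorem stmt18_general (N : ℕ) (qp qm qpbar qmbar : Fin N → ℝ)
    (hq : ∀ k, 0 < qp k ∧ qp k < 1 ∧ 0 < qm k ∧ qm k < 1)
    (hqbar : ∀ k, 0 < qpbar k ∧ qpbar k < 1 ∧ 0 < qmbar k ∧ qmbar k < 1)
    (hrel : ∀ (k : Fin N) (hk : (k : ℕ) + 1 < N), qp ⟨(k : ℕ) + 1, hk⟩ + qm k = 1)
    (hrelbar : ∀ (k : Fin N) (hk : (k : ℕ) + 1 < N), qpbar ⟨(k : ℕ) + 1, hk⟩ + qmbar k = 1)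
    (hqcomp : ∀ n : Fin N, 1 ≤ (n : ℕ) → qp n ≤ qpbar n)
    (X Xbar Y Ybar : ℝ → Fin N → ℝ) (L Lbar : ℝ → Fin (N + 1) → ℝ)
    (h0 : ∀ k, X 0 k ≤ Xbar 0 k)
    (hincr : ∀ s t : ℝ, 0 ≤ s → s ≤ t → ∀ k, X t k - X s k ≤ Xbar t k - Xbar s k)
    (hY : IsCompetingParticleSystem N qp qm X Y L)
    (hYbar : IsCompetingParticleSystem N qpbar qmbar Xbar Ybar Lbar) :
    ∀ t : ℝ, 0 ≤ t → ∀ k, Y t k ≤ Ybar t k := by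
  intro T hT k
  have hne : (Finset.univ : Finset (Fin N)).Nonempty := ⟨k, Finset.mem_univ k⟩
  set g : ℝ → ℝ := fun t => Finset.univ.sup' hne fun m => Y t m - Ybar t m
  have hle_g : ∀ t m, Y t m - Ybar t m ≤ g t := fun t m =>
    Finset.le_sup' (fun m => Y t m - Ybar t m) (Finset.mem_univ m)
  have hqp_le (k : Fin N) (hk : (k : ℕ) + 1 < N) : qp ⟨k + 1, hk⟩ ≤ qpbar ⟨k + 1, hk⟩ :=
    hqcomp _ (by simp)
  have hqm_le (k : Fin N) (hk : (k : ℕ) + 1 < N) : qmbar k ≤ qm k := by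
    linarith [hrel k hk, hrelbar k hk, hqp_le k hk]
  have hstep : ∀ t > 0, ∃ u ∈ Ico 0 t, g t ≤ g u := by
    intro t ht
    obtain ⟨k₀, -, hk₀⟩ : ∃ k₀ ∈ Finset.univ, g t = Y t k₀ - Ybar t k₀ :=
      Finset.exists_mem_eq_sup' hne fun m => Y t m - Ybar t m
    obtain ⟨u, hu, m, hm⟩ := hY.exists_Ico_gap_le hYbar (fun k => (hq k).1)
      (fun k => (hq k).2.2.1) (fun k => (hqbar k).1.le) hqp_le hqm_le hincr ht
      fun m => (hle_g t m).trans_eq hk₀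
    exact ⟨u, hu, hk₀.trans_le (hm.trans (hle_g u m))⟩
  have hg : Continuous g :=
    Continuous.finset_sup'_apply hne fun m _ =>
      (hY.continuous_apply m).sub (hYbar.continuous_apply m)
  have hg0 : g 0 ≤ 0 := Finset.sup'_le _ _ fun m _ => by
    rw [hY.apply_zero, hYbar.apply_zero]
    exact sub_nonpos.2 (h0 m)
  linarith [hle_g T k, hg.apply_le_of_forall_exists_Ico_le hstep hT]

/-- Comparison theorem for systems of competing particles: if the driving functions satisfy
`X(0) ≤ X̄(0)` and `X(t) − X(s) ≤ X̄(t) − X̄(s)` for `0 ≤ s ≤ t`, and the collision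
parameters satisfy `q_n^+ ≤ q̄_n^+` for `n = 2, …, N`, then `Y(t) ≤ Ȳ(t)` for all `t ≥ 0`. -/
theorem stmt18 (N : ℕ) (hN : 2 ≤ N) (qp qm qpbar qmbar : Fin N → ℝ)
    (hq : ∀ k, 0 < qp k ∧ qp k < 1 ∧ 0 < qm k ∧ qm k < 1)
    (hqbar : ∀ k, 0 < qpbar k ∧ qpbar k < 1 ∧ 0 < qmbar k ∧ qmbar k < 1)
    (hrel : ∀ (k : Fin N) (hk : (k : ℕ) + 1 < N), qp ⟨(k : ℕ) + 1, hk⟩ + qm k = 1)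
    (hrelbar : ∀ (k : Fin N) (hk : (k : ℕ) + 1 < N), qpbar ⟨(k : ℕ) + 1, hk⟩ + qmbar k = 1)
    (hqcomp : ∀ n : Fin N, 1 ≤ (n : ℕ) → qp n ≤ qpbar n)
    (X Xbar Y Ybar : ℝ → Fin N → ℝ) (L Lbar : ℝ → Fin (N + 1) → ℝ)
    (hX : ∀ k, Continuous fun t => X t k) (hXbar : ∀ k, Continuous fun t => Xbar t k)
    (hX0 : Monotone (X 0)) (hXbar0 : Monotone (Xbar 0))
    (h0 : ∀ k, X 0 k ≤ Xbar 0 k)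
    (hincr : ∀ s t : ℝ, 0 ≤ s → s ≤ t → ∀ k, X t k - X s k ≤ Xbar t k - Xbar s k)
    (hY : IsCompetingParticleSystem N qp qm X Y L)
    (hYbar : IsCompetingParticleSystem N qpbar qmbar Xbar Ybar Lbar) :
    ∀ t : ℝ, 0 ≤ t → ∀ k, Y t k ≤ Ybar t k :=
  stmt18_general N qp qm qpbar qmbar hq hqbar hrel hrelbar hqcomp X Xbar Y Ybar L Lbar h0 hincr hY
    hYbar
end
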